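/- arXiv:1201.3953 — 5 statements merged into one kernel-verified Lean document; each statement's English description precedes it below -/
import Mathlib

section
/- Let p₁ ≤ p₂ be probabilities in [0,1], and consider bond percolation on a finite graph G coupled simultaneously via i.i.d. uniform [0,1] edge labels (an edge is p-open iff its label is ≤ p). Then for any vertex v and integer r > 0, the probability under p₂ that the intrinsic-metric ball boundary ∂B_v(r) is nonempty is at most (p₂/p₁)^r times the probability under p₁ that ∂B_v(r) is nonempty. -/
/-!
Couple the two percolations by thinning: keep each `p₂`-open edge independently with probability
`p₁ / p₂`, which produces `p₁`-percolation. If `∂B_v(r) ≠ ∅` in the `p₂`-configuration, fix a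
geodesic from `v` to a point of the sphere; it has at most `r` edges. Whenever the thinning keeps
these edges, the geodesic survives while no distance can decrease, so the sphere stays nonempty.
This has conditional probability at least `(p₁ / p₂) ^ r`.
-/

open Classical

noncomputable section

/-- Two vertices are joined by an edge of `G` that is open in the configuration `ω`. -/
def OpenAdj {V : Type*} (G : SimpleGraph V) (ω : Sym2 V → Bool) (x y : V) : Prop :=
  G.Adj x y ∧ ω s(x, y) = true

/-- `x` and `y` are connected by an open path with at most `r` edges. -/
def ConnWithin {V : Type*} (G : SimpleGraph V) (ω : Sym2 V → Bool) (x y : V) (r : ℕ) : Prop :=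
  ∃ l : List V, List.Chain (OpenAdj G ω) x l ∧
    (x :: l).getLast (List.cons_ne_nil x l) = y ∧ l.length ≤ r

/-- The intrinsic (open-path) distance from `x` to `y` equals `r`. -/
def DistEq {V : Type*} (G : SimpleGraph V) (ω : Sym2 V → Bool) (x y : V) (r : ℕ) : Prop :=
  ConnWithin G ω x y r ∧ ∀ s < r, ¬ ConnWithin G ω x y s

/-- The boundary `∂B_x(r)` of the intrinsic ball of radius `r` around `x` is nonempty. -/
def SphereNonempty {V : Type*} (G : SimpleGraph V) (ω : Sym2 V → Bool) (x : V) (r : ℕ) : Prop :=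
  ∃ y, DistEq G ω x y r

/-- The Bernoulli product weight of a single percolation configuration. -/
def edgeWeight {V : Type*} [Fintype V] [DecidableEq V] (p : ℝ) (ω : Sym2 V → Bool) : ℝ :=
  ∏ e : Sym2 V, if ω e then p else 1 - p

/-- The probability of the event `S` under bond percolation with parameter `p`. -/
def percProb {V : Type*} [Fintype V] [DecidableEq V] (p : ℝ) (S : Set (Sym2 V → Bool)) : ℝ :=
  ∑ ω : Sym2 V → Bool, if ω ∈ S then edgeWeight p ω else 0

/-- Expectation under bond percolation with parameter `p`. -/
def percExp {V : Type*} [Fintype V] [DecidableEq V] (p : ℝ) (f : (Sym2 V → Bool) → ℝ) : ℝ :=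
  ∑ ω : Sym2 V → Bool, edgeWeight p ω * f ω

open Finset

section Coupling

variable {ι : Type*} [Fintype ι]

def bernoulliWeight (p : ℝ) (ω : ι → Bool) : ℝ :=
  ∏ i, if ω i then p else 1 - p

/-- Joint law of `(𝟙[U ≤ p₂], 𝟙[U ≤ p₁])` for `U` uniform on `[0, 1]`. -/
def couplingWeight (p₁ p₂ : ℝ) : Bool → Bool → ℝ
  | true, true => p₁
  | true, false => p₂ - p₁
  | false, true => 0
  | false, false => 1 - p₂

def coupling (p₁ p₂ : ℝ) (ω η : ι → Bool) : ℝ :=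
  ∏ i, couplingWeight p₁ p₂ (ω i) (η i)

def openOn [DecidableEq ι] (P : Finset ι) : Finset (ι → Bool) :=
  Fintype.piFinset fun i => if i ∈ P then {true} else univ

variable {p₁ p₂ : ℝ}

lemma couplingWeight_nonneg (hp₁ : 0 ≤ p₁) (h₁₂ : p₁ ≤ p₂) (hp₂ : p₂ ≤ 1) (a b : Bool) :
    0 ≤ couplingWeight p₁ p₂ a b := by
  cases a <;> cases b <;> simp only [couplingWeight] <;> linarith

lemma coupling_nonneg (hp₁ : 0 ≤ p₁) (h₁₂ : p₁ ≤ p₂) (hp₂ : p₂ ≤ 1) (ω η : ι → Bool) :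
    0 ≤ coupling p₁ p₂ ω η :=
  prod_nonneg fun _ _ => couplingWeight_nonneg hp₁ h₁₂ hp₂ _ _

lemma le_of_coupling_ne_zero {ω η : ι → Bool} (h : coupling p₁ p₂ ω η ≠ 0) : η ≤ ω := by
  intro i
  cases hω : ω i
  · cases hη : η i
    · exact le_rfl
    · exact absurd (prod_eq_zero (mem_univ i) (by rw [hω, hη, couplingWeight])) h
  · exact le_top

lemma sum_coupling_left [DecidableEq ι] (η : ι → Bool) :
    ∑ ω, coupling p₁ p₂ ω η = bernoulliWeight p₁ η := by
  simp only [coupling]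
  rw [← Fintype.prod_sum (fun i a => couplingWeight p₁ p₂ a (η i))]
  refine prod_congr rfl fun i _ => ?_
  cases η i <;> simp [couplingWeight]

lemma bernoulliWeight_eq_sum_coupling_openOn [DecidableEq ι] (hp₁ : p₁ ≠ 0) {P : Finset ι}
    {ω : ι → Bool} (hP : ∀ i ∈ P, ω i = true) :
    bernoulliWeight p₂ ω = (p₂ / p₁) ^ #P * ∑ η ∈ openOn P, coupling p₁ p₂ ω η := by
  simp only [openOn, coupling]
  rw [← prod_univ_sum, ← prod_const, ← Fintype.prod_ite_mem,
    ← prod_mul_distrib, bernoulliWeight]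
  refine prod_congr rfl fun i _ => ?_
  by_cases hi : i ∈ P
  · simp [hi, hP i hi, couplingWeight, hp₁]
  · cases ω i <;> simp [hi, couplingWeight]

def HasThinningWitnesses (A : Set (ι → Bool)) (r : ℕ) : Prop :=
  ∀ ω ∈ A, ∃ P : Finset ι, #P ≤ r ∧ (∀ i ∈ P, ω i = true) ∧
    ∀ η, (∀ i ∈ P, η i = true) → η ≤ ω → η ∈ A

lemma sum_coupling_openOn_le [DecidableEq ι] (hp₁ : 0 ≤ p₁) (h₁₂ : p₁ ≤ p₂) (hp₂ : p₂ ≤ 1)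
    {A : Set (ι → Bool)} {P : Finset ι} {ω : ι → Bool}
    (hA : ∀ η, (∀ i ∈ P, η i = true) → η ≤ ω → η ∈ A) :
    ∑ η ∈ openOn P, coupling p₁ p₂ ω η ≤ ∑ η with η ∈ A, coupling p₁ p₂ ω η := by
  rw [← sum_filter_ne_zero]
  refine sum_le_sum_of_subset_of_nonneg (fun η hη => ?_)
    fun η _ _ => coupling_nonneg hp₁ h₁₂ hp₂ ω η
  obtain ⟨hηP, hη⟩ := mem_filter.1 hη
  refine mem_filter.2 ⟨mem_univ η, hA η (fun i hi => ?_) (le_of_coupling_ne_zero hη)⟩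
  simpa [openOn, hi] using Fintype.mem_piFinset.1 hηP i

theorem sum_bernoulliWeight_le_of_hasThinningWitnesses [DecidableEq ι] (hp₁ : 0 < p₁)
    (h₁₂ : p₁ ≤ p₂) (hp₂ : p₂ ≤ 1) {A : Set (ι → Bool)} {r : ℕ} (hA : HasThinningWitnesses A r) :
    ∑ ω with ω ∈ A, bernoulliWeight p₂ ω ≤
      (p₂ / p₁) ^ r * ∑ ω with ω ∈ A, bernoulliWeight p₁ ω := by
  choose! P hPcard hPopen hPA using hA
  have hratio : 1 ≤ p₂ / p₁ := (one_le_div hp₁).2 h₁₂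
  calc ∑ ω with ω ∈ A, bernoulliWeight p₂ ω
      = ∑ ω with ω ∈ A, (p₂ / p₁) ^ #(P ω) * ∑ η ∈ openOn (P ω), coupling p₁ p₂ ω η :=
        sum_congr rfl fun ω hω =>
          bernoulliWeight_eq_sum_coupling_openOn hp₁.ne' (hPopen ω (mem_filter.1 hω).2)
    _ ≤ ∑ ω with ω ∈ A, (p₂ / p₁) ^ r * ∑ η with η ∈ A, coupling p₁ p₂ ω η := by
        refine sum_le_sum fun ω hω => ?_
        have hωA := (mem_filter.1 hω).2
        exact mul_le_mul (pow_le_pow_right₀ hratio (hPcard ω hωA))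
          (sum_coupling_openOn_le hp₁.le h₁₂ hp₂ (hPA ω hωA))
          (sum_nonneg fun η _ => coupling_nonneg hp₁.le h₁₂ hp₂ ω η) (by positivity)
    _ ≤ (p₂ / p₁) ^ r * ∑ ω, ∑ η with η ∈ A, coupling p₁ p₂ ω η := by
        rw [← mul_sum]
        refine mul_le_mul_of_nonneg_left ?_ (by positivity)
        exact sum_le_sum_of_subset_of_nonneg (filter_subset _ _) fun ω _ _ =>
          sum_nonneg fun η _ => coupling_nonneg hp₁.le h₁₂ hp₂ ω η
    _ = (p₂ / p₁) ^ r * ∑ η with η ∈ A, bernoulliWeight p₁ η := by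
        simp only [sum_comm (s := univ), sum_coupling_left]

end Coupling

section Percolation

variable {V : Type*} (G : SimpleGraph V)

def pathEdges (x : V) : List V → List (Sym2 V)
  | [] => []
  | y :: l => s(x, y) :: pathEdges y l

lemma length_pathEdges (x : V) (l : List V) : (pathEdges x l).length = l.length := by
  induction l generalizing x with
  | nil => rfl
  | cons y l ih => simp [pathEdges, ih]

lemma isChain_openAdj_iff {ω : Sym2 V → Bool} {x : V} {l : List V} :
    (x :: l).IsChain (OpenAdj G ω) ↔
      (x :: l).IsChain G.Adj ∧ ∀ e ∈ pathEdges x l, ω e = true := by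
  induction l generalizing x with
  | nil => simp [pathEdges]
  | cons y l ih =>
    simp only [List.isChain_cons_cons, ih, OpenAdj, pathEdges, List.forall_mem_cons]
    tauto

variable {G}

lemma ConnWithin.mono {ω η : Sym2 V → Bool} (h : η ≤ ω) {x y : V} {s : ℕ}
    (hc : ConnWithin G η x y s) : ConnWithin G ω x y s := by
  obtain ⟨l, hl, hlast, hlen⟩ := hc
  refine ⟨l, List.IsChain.imp (fun a b hab => ⟨hab.1, ?_⟩) hl, hlast, hlen⟩
  simpa using h s(a, b) hab.2

variable (G)

/-- Closing edges off a geodesic keeps the geodesic and cannot shorten any distance. -/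
theorem hasThinningWitnesses_sphereNonempty [DecidableEq V] (v : V) (r : ℕ) :
    HasThinningWitnesses {ω | SphereNonempty G ω v r} r := by
  rintro ω ⟨y, ⟨l, hl, hlast, hlen⟩, hmin⟩
  rw [List.Chain, isChain_openAdj_iff] at hl
  refine ⟨(pathEdges v l).toFinset, ?_, fun e he => hl.2 e (List.mem_toFinset.1 he), ?_⟩
  · exact (List.toFinset_card_le _).trans ((length_pathEdges v l).trans_le hlen)
  · intro η hη hηω
    refine ⟨y, ⟨l, ?_, hlast, hlen⟩, fun s hs hc => hmin s hs (hc.mono hηω)⟩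
    rw [List.Chain, isChain_openAdj_iff]
    exact ⟨hl.1, fun e he => hη e (List.mem_toFinset.2 he)⟩

lemma percProb_eq_sum_bernoulliWeight [Fintype V] [DecidableEq V] (p : ℝ)
    (S : Set (Sym2 V → Bool)) : percProb p S = ∑ ω with ω ∈ S, bernoulliWeight p ω :=
  (sum_filter _ _).symm

end Percolation

theorem sphere_nonempty_prob_comparison_general {V : Type*} [Fintype V] [DecidableEq V]
    (G : SimpleGraph V) (p₁ p₂ : ℝ) (hp₁ : 0 < p₁) (h₁₂ : p₁ ≤ p₂) (hp₂ : p₂ ≤ 1)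
    (v : V) (r : ℕ) :
    percProb p₂ {ω | SphereNonempty G ω v r}
      ≤ (p₂ / p₁) ^ r * percProb p₁ {ω | SphereNonempty G ω v r} := by
  rw [percProb_eq_sum_bernoulliWeight, percProb_eq_sum_bernoulliWeight]
  exact sum_bernoulliWeight_le_of_hasThinningWitnesses hp₁ h₁₂ hp₂
    (hasThinningWitnesses_sphereNonempty G v r)

/-- **Coupling monotonicity of intrinsic spheres (probabilities).**  For `0 < p₁ ≤ p₂ ≤ 1`
and any vertex `v` and integer `r > 0`, the probability under `p₂`-percolation that
`∂B_v(r) ≠ ∅` is at most `(p₂/p₁)^r` times the probability under `p₁`-percolation. -/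
theorem sphere_nonempty_prob_comparison {V : Type*} [Fintype V] [DecidableEq V]
    (G : SimpleGraph V) (p₁ p₂ : ℝ) (hp₁ : 0 < p₁) (h₁₂ : p₁ ≤ p₂) (hp₂ : p₂ ≤ 1)
    (v : V) (r : ℕ) (hr : 0 < r) :
    percProb p₂ {ω | SphereNonempty G ω v r}
      ≤ (p₂ / p₁) ^ r * percProb p₁ {ω | SphereNonempty G ω v r} :=
  sphere_nonempty_prob_comparison_general G p₁ p₂ hp₁ h₁₂ hp₂ v r

end
end

section
/- (Disjoint survival via conditioning) For bond percolation with parameter p on a finite graph G, for any vertices x, y and integers r, s: P(∂B_x(r) ≠ ∅, ∂B_y(s) ≠ ∅, B_x(r) ∩ B_y(s) = ∅) ≤ P(∂B_x(r) ≠ ∅) · max_{A ⊆ V} P(∂B_y(s) ≠ ∅ off A). -/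
open Classical

noncomputable section

/-- The configuration obtained from `ω` by closing every edge touching a vertex of `A`. -/
def closeOff {V : Type*} (A : Set V) (ω : Sym2 V → Bool) : Sym2 V → Bool :=
  fun e => if ∃ v ∈ A, v ∈ e then false else ω e

/-!
Condition on the ball `A = B_x(r)`. A path of length at most `r` from `x` only uses edges with
an endpoint at distance less than `r` from `x`, so the event `{B_x(r) = A, ∂B_x(r) ≠ ∅}` is
determined by the edges touching `A`. When moreover `B_y(s)` avoids `A`, no path of length at
most `s` from `y` uses such an edge, so `∂B_y(s) ≠ ∅` holds iff it holds off `A`, an event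
determined by the edges not touching `A`. The two events are independent under the product
measure; bounding the second probability by its maximum over `A` and summing over `A` gives
the claim.
-/

section Bernoulli

variable {V : Type*} [Fintype V] [DecidableEq V] {p : ℝ}

lemma edgeWeight_nonneg (hp0 : 0 ≤ p) (hp1 : p ≤ 1) (ω : Sym2 V → Bool) :
    0 ≤ edgeWeight p ω :=
  Finset.prod_nonneg fun e _ => by cases ω e <;> simp <;> linarith

lemma sum_edgeWeight (p : ℝ) : ∑ ω : Sym2 V → Bool, edgeWeight p ω = 1 := by
  simp only [edgeWeight, ← Fintype.prod_sum (fun (_ : Sym2 V) (b : Bool) => if b then p else 1 - p),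
    Fintype.sum_bool, if_true, Bool.false_eq_true, if_false, add_sub_cancel,
    Finset.prod_const_one]

lemma edgeWeight_piecewise_mul_edgeWeight_piecewise (p : ℝ) (D : Set (Sym2 V))
    (ω ω' : Sym2 V → Bool) :
    edgeWeight p (D.piecewise ω ω') * edgeWeight p (D.piecewise ω' ω) =
      edgeWeight p ω * edgeWeight p ω' := by
  simp only [edgeWeight, ← Finset.prod_mul_distrib]
  refine Finset.prod_congr rfl fun e _ => ?_
  by_cases he : e ∈ D
  · simp only [Set.piecewise_eq_of_mem _ _ _ he]
  · simp only [Set.piecewise_eq_of_notMem _ _ _ he, mul_comm]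

/-- Exchanging the `D`-coordinates of two independent configurations preserves the product
measure, and turns `f ω₁ * g ω₂` into `f * g` evaluated at a single configuration. -/
lemma percExp_mul_of_dependsOn {D : Set (Sym2 V)} {f g : (Sym2 V → Bool) → ℝ}
    (hf : DependsOn f D) (hg : DependsOn g Dᶜ) :
    percExp p (f * g) = percExp p f * percExp p g := by
  let swap (ωω : (Sym2 V → Bool) × (Sym2 V → Bool)) :=
    (D.piecewise ωω.1 ωω.2, D.piecewise ωω.2 ωω.1)
  have hswap : Function.Involutive swap := fun ωω =>
    Prod.ext (funext fun e => by by_cases he : e ∈ D <;> simp [swap, he])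
      (funext fun e => by by_cases he : e ∈ D <;> simp [swap, he])
  have hf' : ∀ ω ω', f (D.piecewise ω ω') = f ω := fun ω ω' =>
    hf fun e he => Set.piecewise_eq_of_mem _ _ _ he
  have hg' : ∀ ω ω', g (D.piecewise ω ω') = g ω' := fun ω ω' =>
    hg fun e he => Set.piecewise_eq_of_notMem _ _ _ he
  calc percExp p (f * g)
      = ∑ ωω : (Sym2 V → Bool) × (Sym2 V → Bool),
          edgeWeight p ωω.1 * edgeWeight p ωω.2 * (f ωω.1 * g ωω.1) := by
        simp only [Fintype.sum_prod_type, percExp, Pi.mul_apply, mul_right_comm _ (edgeWeight p _),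
          ← Finset.mul_sum, sum_edgeWeight, mul_one]
    _ = ∑ ωω : (Sym2 V → Bool) × (Sym2 V → Bool),
          edgeWeight p ωω.1 * edgeWeight p ωω.2 * (f ωω.1 * g ωω.2) := by
        refine (Fintype.sum_bijective swap hswap.bijective _ _ fun ωω => ?_).symm
        simp only [swap, hf', hg', edgeWeight_piecewise_mul_edgeWeight_piecewise]
    _ = percExp p f * percExp p g := by
        rw [Fintype.sum_prod_type, percExp, percExp, Finset.sum_mul_sum]
        simp only [mul_mul_mul_comm]

lemma percProb_eq_percExp (p : ℝ) (S : Set (Sym2 V → Bool)) :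
    percProb p S = percExp p (S.indicator 1) := by
  simp only [percProb, percExp, Set.indicator_apply, Pi.one_apply, mul_ite, mul_one, mul_zero]

lemma percProb_inter_of_dependsOn {D : Set (Sym2 V)} {S T : Set (Sym2 V → Bool)}
    (hS : DependsOn (· ∈ S) D) (hT : DependsOn (· ∈ T) Dᶜ) :
    percProb p (S ∩ T) = percProb p S * percProb p T := by
  simp only [percProb_eq_percExp, Set.inter_indicator_one]
  exact percExp_mul_of_dependsOn (D := D) (fun ω ω' h => by simp [Set.indicator_apply, hS h])
    (fun ω ω' h => by simp [Set.indicator_apply, hT h])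

lemma percProb_nonneg (hp0 : 0 ≤ p) (hp1 : p ≤ 1) (S : Set (Sym2 V → Bool)) :
    0 ≤ percProb p S :=
  Finset.sum_nonneg fun ω _ => by split <;> simp [edgeWeight_nonneg hp0 hp1]

lemma percProb_mono (hp0 : 0 ≤ p) (hp1 : p ≤ 1) {S T : Set (Sym2 V → Bool)} (h : S ⊆ T) :
    percProb p S ≤ percProb p T :=
  Finset.sum_le_sum fun ω _ => by
    split_ifs with hS hT
    · exact le_rfl
    · exact absurd (h hS) hT
    · exact edgeWeight_nonneg hp0 hp1 ω
    · exact le_rfl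

lemma sum_percProb_inter_preimage {ι : Type*} [Fintype ι] (p : ℝ)
    (F : (Sym2 V → Bool) → ι) (S : Set (Sym2 V → Bool)) :
    ∑ i, percProb p (S ∩ F ⁻¹' {i}) = percProb p S := by
  simp only [percProb]
  rw [Finset.sum_comm]
  refine Fintype.sum_congr _ _ fun ω => ?_
  by_cases hS : ω ∈ S <;> simp [hS, Set.mem_inter_iff]

end Bernoulli

section IntrinsicBall

variable {V : Type*} {G : SimpleGraph V} {ω ω' : Sym2 V → Bool} {x z : V} {r : ℕ}

lemma connWithin_zero_iff : ConnWithin G ω x z 0 ↔ z = x := by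
  constructor
  · rintro ⟨l, -, hz, hl⟩
    obtain rfl := List.length_eq_zero_iff.mp (Nat.le_zero.mp hl)
    exact hz.symm
  · rintro rfl
    exact ⟨[], List.IsChain.singleton _, rfl, le_rfl⟩

lemma connWithin_succ_iff :
    ConnWithin G ω x z (r + 1) ↔
      ConnWithin G ω x z r ∨ ∃ u, ConnWithin G ω x u r ∧ OpenAdj G ω u z := by
  constructor
  · rintro ⟨l, hc, hz, hl⟩
    rcases Nat.lt_or_ge l.length (r + 1) with hlt | hge
    · exact Or.inl ⟨l, hc, hz, Nat.le_of_lt_succ hlt⟩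
    obtain ⟨l, z', rfl⟩ := (List.eq_nil_or_concat' l).resolve_left (by rintro rfl; simp at hge)
    obtain rfl : z' = z := by simpa using hz
    replace hc : List.IsChain (OpenAdj G ω) ((x :: l) ++ [z']) := hc
    obtain ⟨hc, -, hlast⟩ := List.isChain_append.mp hc
    refine Or.inr ⟨(x :: l).getLast (List.cons_ne_nil x l), ⟨l, hc, rfl, by simpa using hl⟩, ?_⟩
    simpa [List.getLast?_eq_some_getLast, ← List.cons_append] using hlast
  · rintro (⟨l, hc, hz, hl⟩ | ⟨u, ⟨l, hc, hu, hl⟩, hadj⟩)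
    · exact ⟨l, hc, hz, hl.trans r.le_succ⟩
    · refine ⟨l ++ [z], ?_, by simp, by simpa using hl⟩
      show List.IsChain (OpenAdj G ω) ((x :: l) ++ [z])
      exact List.IsChain.append hc (List.IsChain.singleton z)
        (by simpa [List.getLast?_eq_some_getLast, hu] using hadj)

lemma ConnWithin.mono_s9 {k : ℕ} (h : ConnWithin G ω x z k) (hkr : k ≤ r) : ConnWithin G ω x z r :=
  let ⟨l, hc, hz, hl⟩ := h
  ⟨l, hc, hz, hl.trans hkr⟩

lemma connWithin_iff_of_openAdj_iff
    (h : ∀ u v k, k < r → ConnWithin G ω x u k → (OpenAdj G ω u v ↔ OpenAdj G ω' u v))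
    {k : ℕ} (hk : k ≤ r) : ConnWithin G ω x z k ↔ ConnWithin G ω' x z k := by
  induction k generalizing z with
  | zero => simp only [connWithin_zero_iff]
  | succ k ih =>
    have hk' : k ≤ r := Nat.le_of_succ_le hk
    simp only [connWithin_succ_iff, ih hk']
    exact or_congr_right <| exists_congr fun u =>
      and_congr_right fun hu => h u z k hk ((ih hk').mpr hu)

lemma sphereNonempty_iff_of_openAdj_iff
    (h : ∀ u v k, k < r → ConnWithin G ω x u k → (OpenAdj G ω u v ↔ OpenAdj G ω' u v)) :
    SphereNonempty G ω x r ↔ SphereNonempty G ω' x r := by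
  have hconn : ∀ z k, k ≤ r → (ConnWithin G ω x z k ↔ ConnWithin G ω' x z k) :=
    fun _ _ hk => connWithin_iff_of_openAdj_iff h hk
  simp only [SphereNonempty, DistEq]
  exact exists_congr fun z => and_congr (hconn z r le_rfl)
    (forall₂_congr fun k hk => not_congr (hconn z k hk.le))

end IntrinsicBall

section Events

variable {V : Type*} {G : SimpleGraph V} {ω : Sym2 V → Bool} {x : V} {r : ℕ}

def edgesTouching (A : Set V) : Set (Sym2 V) :=
  {e | ∃ v ∈ A, v ∈ e}

lemma dependsOn_closeOff (A : Set V) : DependsOn (closeOff A) (edgesTouching A)ᶜ := by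
  intro ω ω' h
  funext e
  by_cases he : ∃ v ∈ A, v ∈ e
  · simp only [closeOff, if_pos he]
  · simp only [closeOff, if_neg he, h e he]

lemma sphereNonempty_closeOff_iff {A : Set V} (hA : ∀ v, ConnWithin G ω x v r → v ∉ A) :
    SphereNonempty G (closeOff A ω) x r ↔ SphereNonempty G ω x r := by
  refine (sphereNonempty_iff_of_openAdj_iff fun u v k hk hu => ?_).symm
  constructor
  · rintro ⟨hadj, hopen⟩
    have hv : ConnWithin G ω x v r :=
      (connWithin_succ_iff.mpr (Or.inr ⟨u, hu, hadj, hopen⟩)).mono_s9 hk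
    refine ⟨hadj, ?_⟩
    rw [closeOff, if_neg]
    · exact hopen
    rintro ⟨w, hw, hwe⟩
    rcases Sym2.mem_iff.mp hwe with rfl | rfl
    exacts [hA _ (hu.mono_s9 hk.le) hw, hA _ hv hw]
  · rintro ⟨hadj, hopen⟩
    refine ⟨hadj, ?_⟩
    unfold closeOff at hopen
    split_ifs at hopen
    exact hopen

variable [Fintype V]

def intrinsicBall (G : SimpleGraph V) (ω : Sym2 V → Bool) (x : V) (r : ℕ) : Finset V :=
  Finset.univ.filter (ConnWithin G ω x · r)

@[simp]
lemma mem_intrinsicBall {z : V} : z ∈ intrinsicBall G ω x r ↔ ConnWithin G ω x z r := by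
  simp [intrinsicBall]

lemma dependsOn_sphereNonempty_and_intrinsicBall_eq (A : Finset V) :
    DependsOn (· ∈ {ω | SphereNonempty G ω x r} ∩ (intrinsicBall G · x r) ⁻¹' {A})
      (edgesTouching A) := by
  suffices key : ∀ ω ω' : Sym2 V → Bool, (∀ e ∈ edgesTouching A, ω e = ω' e) →
      SphereNonempty G ω x r → intrinsicBall G ω x r = A →
      SphereNonempty G ω' x r ∧ intrinsicBall G ω' x r = A from
    fun ω ω' h => propext ⟨fun ⟨hs, hb⟩ => key ω ω' h hs hb,
      fun ⟨hs, hb⟩ => key ω' ω (fun e he => (h e he).symm) hs hb⟩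
  intro ω ω' h hsphere hball
  have hopen : ∀ u v k, k < r → ConnWithin G ω x u k → (OpenAdj G ω u v ↔ OpenAdj G ω' u v) := by
    intro u v k hk hu
    have huA : u ∈ A := hball ▸ mem_intrinsicBall.mpr (hu.mono_s9 hk.le)
    rw [OpenAdj, OpenAdj, h s(u, v) ⟨u, huA, Sym2.mem_mk_left u v⟩]
  refine ⟨(sphereNonempty_iff_of_openAdj_iff hopen).mp hsphere, hball ▸ ?_⟩
  ext z
  rw [mem_intrinsicBall, mem_intrinsicBall]
  exact (connWithin_iff_of_openAdj_iff hopen le_rfl).symm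

end Events

/-- **Disjoint survival.**  For bond percolation with parameter `p`, vertices `x, y` and
integers `r, s`:
`P(∂B_x(r) ≠ ∅, ∂B_y(s) ≠ ∅, B_x(r) ∩ B_y(s) = ∅)
  ≤ P(∂B_x(r) ≠ ∅) · max_{A ⊆ V} P(∂B_y(s) ≠ ∅ off A)`. -/
theorem disjoint_survival {V : Type*} [Fintype V] [DecidableEq V]
    (G : SimpleGraph V) (p : ℝ) (hp0 : 0 ≤ p) (hp1 : p ≤ 1)
    (x y : V) (r s : ℕ) :
    percProb p {ω | SphereNonempty G ω x r ∧ SphereNonempty G ω y s ∧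
        {z | ConnWithin G ω x z r} ∩ {z | ConnWithin G ω y z s} = ∅}
      ≤ percProb p {ω | SphereNonempty G ω x r} *
          ⨆ A : Finset V, percProb p {ω | SphereNonempty G (closeOff (↑A) ω) y s} := by
  set survivalOff : Finset V → ℝ :=
    fun A => percProb p {ω | SphereNonempty G (closeOff (↑A) ω) y s}
  set ballEvent : Finset V → Set (Sym2 V → Bool) :=
    fun A => {ω | SphereNonempty G ω x r} ∩ (intrinsicBall G · x r) ⁻¹' {A}
  have hsub : ∀ A, {ω | SphereNonempty G ω x r ∧ SphereNonempty G ω y s ∧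
      {z | ConnWithin G ω x z r} ∩ {z | ConnWithin G ω y z s} = ∅} ∩
        (intrinsicBall G · x r) ⁻¹' {A} ⊆
      ballEvent A ∩ {ω | SphereNonempty G (closeOff (↑A) ω) y s} := by
    rintro A ω ⟨⟨hx, hy, hdisj⟩, hball⟩
    refine ⟨⟨hx, hball⟩, (sphereNonempty_closeOff_iff fun v hv hvA => ?_).mpr hy⟩
    rw [← Set.mem_singleton_iff.mp hball, Finset.mem_coe, mem_intrinsicBall] at hvA
    exact hdisj.subset ⟨hvA, hv⟩
  calc _ = ∑ A, percProb p (_ ∩ (intrinsicBall G · x r) ⁻¹' {A}) :=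
        (sum_percProb_inter_preimage p _ _).symm
    _ ≤ ∑ A, percProb p (ballEvent A ∩ {ω | SphereNonempty G (closeOff (↑A) ω) y s}) :=
        Finset.sum_le_sum fun A _ => percProb_mono hp0 hp1 (hsub A)
    _ = ∑ A, percProb p (ballEvent A) * survivalOff A := by
        refine Finset.sum_congr rfl fun A _ => percProb_inter_of_dependsOn
          (dependsOn_sphereNonempty_and_intrinsicBall_eq A) fun ω ω' h =>
            congrArg (SphereNonempty G · y s) (dependsOn_closeOff (A : Set V) h)
    _ ≤ ∑ A, percProb p (ballEvent A) * ⨆ B, survivalOff B :=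
        Finset.sum_le_sum fun A _ => mul_le_mul_of_nonneg_left
          (le_ciSup (Set.finite_range survivalOff).bddAbove A) (percProb_nonneg hp0 hp1 _)
    _ = _ := by rw [← Finset.sum_mul, sum_percProb_inter_preimage]
end
end

section
/- Let G be a finite transitive graph and define p_c by E_{p_c}|C(0)| = λ V^{1/3} for a fixed λ > 0. Then there exists ξ > 0 (depending on λ) such that for all integers r ≤ ξ V^{1/3}, the expected intrinsic ball size at criticality satisfies E_{p_c}|B(r)| ≥ r/4. -/
open Classical

noncomputable section

/-- `x` and `y` are connected by an open path. -/
def Conn {V : Type*} (G : SimpleGraph V) (ω : Sym2 V → Bool) (x y : V) : Prop :=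
  Relation.ReflTransGen (OpenAdj G ω) x y

/-- The size of the open cluster of `x`: `|C(x)|`. -/
def clusterSize {V : Type*} (G : SimpleGraph V) (ω : Sym2 V → Bool) (x : V) : ℕ :=
  Nat.card {y : V // Conn G ω x y}

/-- The size of the intrinsic ball of radius `r` around `x`: `|B_x(r)|`. -/
def ballSize {V : Type*} (G : SimpleGraph V) (ω : Sym2 V → Bool) (x : V) (r : ℕ) : ℕ :=
  Nat.card {y : V // ConnWithin G ω x y r}

/-!
Write `f t = E|B(t)|` and `g i = E|∂B(i)|`, so that `f` is the sequence of partial sums of `g`.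
Exploring `B(a)` inspects only the edges touching `B(a - 1)`, and every vertex of
`B(a + s) \ B(a)` is joined to `∂B(a)` by an open path of length `≤ s` through the other edges.
Resampling those edges independently bounds the expected number of such vertices by `g a` times
the largest expected ball of radius `s`, which by transitivity is `f s`:
`f (a + s) ≤ f a + g a * f s`.

If `f r < r / 4`, pigeonhole gives a radius in `[0, r]` with `g ≤ 1/4`, and then, in each
following window of length `r`, a radius where `g` is four times smaller, while `f` never exceeds
`r / 3`. Hence `λ V^{1/3} = E|C(0)| ≤ f |V| ≤ r / 3`, which is impossible for
`r ≤ (λ / 2) V^{1/3}`.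
-/

namespace Percolation

open Finset

section Paths

variable {V : Type*} {G : SimpleGraph V} {ω : Sym2 V → Bool} {x y u : V} {r : ℕ}

variable (G ω) in
def openGraph : SimpleGraph V where
  Adj := OpenAdj G ω
  symm := ⟨fun _ _ h => ⟨h.1.symm, by rw [Sym2.eq_swap]; exact h.2⟩⟩
  loopless := ⟨fun _ h => G.loopless.irrefl _ h.1⟩

theorem connWithin_iff_exists_walk :
    ConnWithin G ω x y r ↔ ∃ p : (openGraph G ω).Walk x y, p.length ≤ r := by
  constructor
  · rintro ⟨l, hchain, hlast, hlen⟩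
    have hadj : (x :: l).IsChain (openGraph G ω).Adj := hchain
    exact ⟨(SimpleGraph.Walk.ofSupport _ (l.cons_ne_nil x) hadj).copy rfl hlast,
      (SimpleGraph.Walk.length_copy _ _ _).trans_le <| by
        rw [SimpleGraph.Walk.length_ofSupport]
        simpa using hlen⟩
  · rintro ⟨p, hp⟩
    refine ⟨p.support.tail, ?_, ?_, by simpa using hp⟩
    · rw [List.Chain, p.cons_tail_support]
      exact p.isChain_adj_support
    · simp [p.cons_tail_support]

theorem connWithin_refl : ConnWithin G ω x x r :=
  connWithin_iff_exists_walk.2 ⟨.nil, r.zero_le⟩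

theorem ConnWithin.mono {r' : ℕ} (h : ConnWithin G ω x y r) (hr : r ≤ r') :
    ConnWithin G ω x y r' :=
  let ⟨l, hchain, hlast, hlen⟩ := h
  ⟨l, hchain, hlast, hlen.trans hr⟩

theorem connWithin_zero : ConnWithin G ω x y 0 ↔ y = x := by
  refine ⟨fun h => ?_, fun h => h ▸ connWithin_refl⟩
  obtain ⟨p, hp⟩ := connWithin_iff_exists_walk.1 h
  exact (SimpleGraph.Walk.eq_of_length_eq_zero (Nat.le_zero.1 hp)).symm

theorem ConnWithin.snoc (h : ConnWithin G ω x u r) (huy : OpenAdj G ω u y) :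
    ConnWithin G ω x y (r + 1) := by
  obtain ⟨p, hp⟩ := connWithin_iff_exists_walk.1 h
  exact connWithin_iff_exists_walk.2
    ⟨p.concat (show (openGraph G ω).Adj u y from huy), by simpa using hp⟩

theorem connWithin_succ :
    ConnWithin G ω x y (r + 1) ↔
      y = x ∨ ∃ u, ConnWithin G ω x u r ∧ OpenAdj G ω u y := by
  refine ⟨fun h => ?_, ?_⟩
  · obtain ⟨p, hp⟩ := connWithin_iff_exists_walk.1 h
    by_cases hnil : p.Nil
    · exact .inl hnil.eq.symm
    · refine .inr ⟨p.penultimate, connWithin_iff_exists_walk.2 ⟨p.dropLast, ?_⟩,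
        SimpleGraph.Walk.adj_penultimate hnil⟩
      rw [SimpleGraph.Walk.length_dropLast]
      omega
  · rintro (rfl | ⟨u, hu, huy⟩)
    · exact connWithin_refl
    · exact ConnWithin.snoc hu huy

theorem Conn.connWithin_card [Fintype V] (h : Conn G ω x y) :
    ConnWithin G ω x y (Fintype.card V) := by
  obtain ⟨p⟩ : (openGraph G ω).Reachable x y :=
    (SimpleGraph.reachable_iff_reflTransGen x y).2 h
  exact connWithin_iff_exists_walk.2 ⟨p.bypass, p.bypass_isPath.length_lt.le⟩

theorem ConnWithin.map {W : Type*} {G' : SimpleGraph W} {ω' : Sym2 W → Bool}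
    (f : openGraph G ω →g openGraph G' ω') (h : ConnWithin G ω x y r) :
    ConnWithin G' ω' (f x) (f y) r := by
  obtain ⟨p, hp⟩ := connWithin_iff_exists_walk.1 h
  exact connWithin_iff_exists_walk.2 ⟨p.map f, by simpa using hp⟩

end Paths

section Exploration

variable {V : Type*} {G : SimpleGraph V} {ω ω' τ : Sym2 V → Bool} {x₀ : V} {a : ℕ}

variable (G) in
/-- The edges inspected by a breadth-first exploration of `B(a)`. -/
def revealed (ω : Sym2 V → Bool) (x₀ : V) (a : ℕ) (e : Sym2 V) : Prop :=
  ∃ v ∈ e, ∃ t < a, ConnWithin G ω x₀ v t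

theorem connWithin_congr_of_eqOn_revealed (h : ∀ e, revealed G ω x₀ a e → ω' e = ω e) :
    ∀ t ≤ a, ∀ v, ConnWithin G ω' x₀ v t ↔ ConnWithin G ω x₀ v t := by
  intro t
  induction t with
  | zero => simp [connWithin_zero]
  | succ t ih =>
    intro ht v
    rw [connWithin_succ, connWithin_succ]
    refine or_congr_right (exists_congr fun u => ?_)
    rw [ih (by omega) u]
    refine and_congr_right fun hu => ?_
    simp only [OpenAdj]
    rw [h _ ⟨u, Sym2.mem_mk_left u v, t, by omega, hu⟩]

theorem revealed_congr (h : ∀ e, revealed G ω x₀ a e → ω' e = ω e) (e : Sym2 V) :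
    revealed G ω' x₀ a e ↔ revealed G ω x₀ a e :=
  exists_congr fun v => and_congr_right fun _ => exists_congr fun t => and_congr_right fun ht =>
    connWithin_congr_of_eqOn_revealed h t ht.le v

theorem distEq_congr (h : ∀ e, revealed G ω x₀ a e → ω' e = ω e) (z : V) :
    DistEq G ω' x₀ z a ↔ DistEq G ω x₀ z a := by
  have hconn := connWithin_congr_of_eqOn_revealed h
  unfold DistEq
  rw [hconn a le_rfl]
  exact and_congr_right fun _ => forall₂_congr fun t ht => not_congr (hconn t ht.le z)

/-- The stretch of a geodesic after its last point at distance `a` uses no revealed edge. -/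
theorem exists_distEq_connWithin_of_not_connWithin
    (hτ : ∀ e, ¬ revealed G ω x₀ a e → ω e = true → τ e = true) {y : V} (s : ℕ)
    (hy : ConnWithin G ω x₀ y (a + s)) (hya : ¬ ConnWithin G ω x₀ y a) :
    ∃ z, DistEq G ω x₀ z a ∧ ConnWithin G τ z y s := by
  induction s generalizing y with
  | zero => exact absurd hy hya
  | succ s ih =>
    rcases connWithin_succ.1 hy with rfl | ⟨u, hu, huy⟩
    · exact absurd connWithin_refl hya
    have hu_far : ∀ t < a, ¬ ConnWithin G ω x₀ u t := fun t ht hut =>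
      hya (ConnWithin.mono (ConnWithin.snoc hut huy) ht)
    have hy_far : ∀ t < a, ¬ ConnWithin G ω x₀ y t := fun t ht hyt =>
      hya (ConnWithin.mono hyt ht.le)
    have huyτ : OpenAdj G τ u y := by
      refine ⟨huy.1, hτ _ ?_ huy.2⟩
      rintro ⟨v, hv, t, ht, hvt⟩
      rcases Sym2.mem_iff.1 hv with rfl | rfl
      exacts [hu_far t ht hvt, hy_far t ht hvt]
    by_cases hua : ConnWithin G ω x₀ u a
    · have hone : ConnWithin G τ u y 1 := ConnWithin.snoc connWithin_refl huyτ
      exact ⟨u, ⟨hua, hu_far⟩, ConnWithin.mono hone (by omega)⟩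
    · obtain ⟨z, hz, hzu⟩ := ih hu hua
      exact ⟨z, hz, ConnWithin.snoc hzu huyτ⟩

end Exploration

section StoppingSets

variable {ι : Type*}

def IsStoppingSet (R : (ι → Bool) → ι → Prop) : Prop :=
  ∀ ω ω' : ι → Bool, (∀ e, R ω e → ω' e = ω e) → ∀ e, R ω' e ↔ R ω e

theorem isStoppingSet_revealed {V : Type*} (G : SimpleGraph V) (x₀ : V) (a : ℕ) :
    IsStoppingSet fun ω => revealed G ω x₀ a :=
  fun _ _ h => revealed_congr h

def splice (S : ι → Prop) (ω τ : ι → Bool) (e : ι) : Bool :=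
  if S e then ω e else τ e

def swapOff (R : (ι → Bool) → ι → Prop) (c : (ι → Bool) × (ι → Bool)) :
    (ι → Bool) × (ι → Bool) :=
  (splice (R c.1) c.1 c.2, splice (R c.1) c.2 c.1)

theorem swapOff_involutive {R : (ι → Bool) → ι → Prop} (hR : IsStoppingSet R) :
    Function.Involutive (swapOff R) := by
  rintro ⟨ω, τ⟩
  have hsame : ∀ e, R (splice (R ω) ω τ) e ↔ R ω e := hR _ _ fun e he => if_pos he
  ext e <;> by_cases he : R ω e <;> simp [swapOff, splice, hsame, he]

end StoppingSets

section Resampling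

variable {V : Type*} [Fintype V] [DecidableEq V] {p : ℝ}

theorem edgeWeight_nonneg (hp0 : 0 ≤ p) (hp1 : p ≤ 1) (ω : Sym2 V → Bool) :
    0 ≤ edgeWeight p ω :=
  prod_nonneg fun e _ => by split <;> linarith

theorem sum_edgeWeight (p : ℝ) : ∑ ω : Sym2 V → Bool, edgeWeight p ω = 1 := by
  unfold edgeWeight
  rw [← Fintype.prod_sum fun (_ : Sym2 V) (b : Bool) => if b then p else 1 - p]
  simp

theorem edgeWeight_swapOff (R : (Sym2 V → Bool) → Sym2 V → Prop)
    (c : (Sym2 V → Bool) × (Sym2 V → Bool)) :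
    edgeWeight p (swapOff R c).1 * edgeWeight p (swapOff R c).2 =
      edgeWeight p c.1 * edgeWeight p c.2 := by
  simp only [edgeWeight, ← prod_mul_distrib]
  refine prod_congr rfl fun e _ => ?_
  by_cases he : R c.1 e <;> simp [swapOff, splice, he, mul_comm]

theorem percExp_mono (hp0 : 0 ≤ p) (hp1 : p ≤ 1) {F F' : (Sym2 V → Bool) → ℝ}
    (h : ∀ ω, F ω ≤ F' ω) : percExp p F ≤ percExp p F' :=
  sum_le_sum fun ω _ => mul_le_mul_of_nonneg_left (h ω) (edgeWeight_nonneg hp0 hp1 ω)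

theorem percExp_nonneg (hp0 : 0 ≤ p) (hp1 : p ≤ 1) {F : (Sym2 V → Bool) → ℝ}
    (h : ∀ ω, 0 ≤ F ω) : 0 ≤ percExp p F :=
  sum_nonneg fun ω _ => mul_nonneg (edgeWeight_nonneg hp0 hp1 ω) (h ω)

theorem percExp_const (p c : ℝ) : percExp p (fun _ : Sym2 V → Bool => c) = c := by
  rw [percExp, ← sum_mul, sum_edgeWeight, one_mul]

theorem percExp_add (F F' : (Sym2 V → Bool) → ℝ) :
    percExp p (fun ω => F ω + F' ω) = percExp p F + percExp p F' := by
  simp only [percExp, mul_add, sum_add_distrib]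

theorem percExp_mul_const (F : (Sym2 V → Bool) → ℝ) (c : ℝ) :
    percExp p (fun ω => F ω * c) = percExp p F * c := by
  simp only [percExp, sum_mul, mul_assoc]

theorem percExp_sum {κ : Type*} (s : Finset κ) (F : κ → (Sym2 V → Bool) → ℝ) :
    percExp p (fun ω => ∑ i ∈ s, F i ω) = ∑ i ∈ s, percExp p (F i) := by
  simp only [percExp, mul_sum]
  exact sum_comm

/-- `swapOff` is a weight-preserving involution of pairs of independent configurations. -/
theorem percExp_eq_percExp_splice {R : (Sym2 V → Bool) → Sym2 V → Prop} (hR : IsStoppingSet R)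
    (F : (Sym2 V → Bool) → ℝ) :
    percExp p F = percExp p fun ω => percExp p fun τ => F (splice (R ω) ω τ) := by
  let σ := (swapOff_involutive hR).toPerm
  have hpair : ∀ H : (Sym2 V → Bool) × (Sym2 V → Bool) → ℝ,
      ∑ c, edgeWeight p c.1 * edgeWeight p c.2 * H c =
        percExp p fun ω => percExp p fun τ => H (ω, τ) := fun H => by
    simp only [Fintype.sum_prod_type, percExp, mul_sum, mul_assoc]
  calc percExp p F
      = ∑ c : (Sym2 V → Bool) × (Sym2 V → Bool),
          edgeWeight p c.1 * edgeWeight p c.2 * F c.1 := by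
        rw [hpair]; simp only [percExp_const]
    _ = ∑ c, edgeWeight p (σ c).1 * edgeWeight p (σ c).2 * F (σ c).1 :=
        (Equiv.sum_comp σ fun c => edgeWeight p c.1 * edgeWeight p c.2 * F c.1).symm
    _ = _ := by
        simp only [σ, Function.Involutive.coe_toPerm, edgeWeight_swapOff]
        exact hpair fun c => F (splice (R c.1) c.1 c.2)

end Resampling

section Balls

variable {V : Type*} [Fintype V] {G : SimpleGraph V} {ω : Sym2 V → Bool} {x : V} {p : ℝ}

variable (G) in
def ball (ω : Sym2 V → Bool) (x : V) (r : ℕ) : Finset V :=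
  {y | ConnWithin G ω x y r}

variable (G) in
def sphere (ω : Sym2 V → Bool) (x : V) (r : ℕ) : Finset V :=
  {y | DistEq G ω x y r}

theorem ballSize_eq_card (r : ℕ) : ballSize G ω x r = (ball G ω x r).card := by
  rw [ballSize, Nat.card_eq_fintype_card, Fintype.card_subtype, ball]

theorem ball_mono {t t' : ℕ} (h : t ≤ t') : ball G ω x t ⊆ ball G ω x t' := by
  intro y
  simpa [ball] using fun hy => ConnWithin.mono hy h

theorem sphere_zero : sphere G ω x 0 = ball G ω x 0 := by
  ext y
  simp [sphere, ball, DistEq]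

variable [DecidableEq V]

theorem sphere_succ (t : ℕ) : sphere G ω x (t + 1) = ball G ω x (t + 1) \ ball G ω x t := by
  ext y
  simp only [sphere, ball, mem_sdiff, mem_filter_univ]
  unfold DistEq
  refine and_congr_right fun _ => ⟨fun h => h t t.lt_succ_self, fun h s hs hys => ?_⟩
  exact h (ConnWithin.mono hys (Nat.lt_succ_iff.1 hs))

theorem card_ball_eq_sum_card_sphere (t : ℕ) :
    (ball G ω x t).card = ∑ i ∈ range (t + 1), (sphere G ω x i).card := by
  induction t with
  | zero => simp [sphere_zero]
  | succ t ih =>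
    rw [sum_range_succ, ← ih, sphere_succ,
      ← card_sdiff_add_card_eq_card (ball_mono (Nat.le_add_right t 1)), add_comm]

theorem percExp_ballSize_eq_sum (x : V) (t : ℕ) :
    percExp p (fun ω => (ballSize G ω x t : ℝ)) =
      ∑ i ∈ range (t + 1), percExp p fun ω => ((sphere G ω x i).card : ℝ) := by
  simp only [ballSize_eq_card, card_ball_eq_sum_card_sphere, Nat.cast_sum]
  exact percExp_sum _ _

theorem percExp_clusterSize_le (hp0 : 0 ≤ p) (hp1 : p ≤ 1) (x : V) :
    percExp p (fun ω => (clusterSize G ω x : ℝ)) ≤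
      percExp p (fun ω => (ballSize G ω x (Fintype.card V) : ℝ)) :=
  percExp_mono hp0 hp1 fun _ => Nat.cast_le.2 <|
    Finite.card_le_of_embedding (Subtype.impEmbedding _ _ fun _ h => Conn.connWithin_card h)

theorem ball_splice_subset (ω τ : Sym2 V → Bool) (x₀ : V) (a s : ℕ) :
    ball G (splice (revealed G ω x₀ a) ω τ) x₀ (a + s) ⊆
      ball G ω x₀ a ∪ (sphere G ω x₀ a).biUnion fun z => ball G τ z s := by
  set ρ := splice (revealed G ω x₀ a) ω τ
  have hagree : ∀ e, revealed G ω x₀ a e → ρ e = ω e := fun e he => if_pos he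
  intro y hy
  simp only [ball, sphere, mem_union, mem_biUnion, mem_filter_univ] at hy ⊢
  by_cases hya : ConnWithin G ρ x₀ y a
  · exact .inl ((connWithin_congr_of_eqOn_revealed hagree a le_rfl y).1 hya)
  · have hτ : ∀ e, ¬ revealed G ρ x₀ a e → ρ e = true → τ e = true := by
      intro e he hρ
      rw [revealed_congr hagree] at he
      simpa [ρ, splice, he] using hρ
    obtain ⟨z, hz, hzy⟩ := exists_distEq_connWithin_of_not_connWithin hτ s hy hya
    exact .inr ⟨z, (distEq_congr hagree z).1 hz, hzy⟩

theorem card_ball_splice_le (ω τ : Sym2 V → Bool) (x₀ : V) (a s : ℕ) :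
    (ball G (splice (revealed G ω x₀ a) ω τ) x₀ (a + s)).card ≤
      (ball G ω x₀ a).card + ∑ z ∈ sphere G ω x₀ a, (ball G τ z s).card :=
  (card_le_card (ball_splice_subset ω τ x₀ a s)).trans <|
    (card_union_le _ _).trans (Nat.add_le_add_left card_biUnion_le _)

theorem percExp_ballSize_add_le (hp0 : 0 ≤ p) (hp1 : p ≤ 1) (x₀ : V) (a s : ℕ) {M : ℝ}
    (hM : ∀ z, percExp p (fun ω => (ballSize G ω z s : ℝ)) ≤ M) :
    percExp p (fun ω => (ballSize G ω x₀ (a + s) : ℝ)) ≤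
      percExp p (fun ω => (ballSize G ω x₀ a : ℝ)) +
        percExp p (fun ω => ((sphere G ω x₀ a).card : ℝ)) * M := by
  simp only [ballSize_eq_card] at hM ⊢
  rw [percExp_eq_percExp_splice (isStoppingSet_revealed G x₀ a), ← percExp_mul_const,
    ← percExp_add]
  refine percExp_mono hp0 hp1 fun ω => ?_
  calc _ ≤ percExp p (fun τ => ((ball G ω x₀ a).card : ℝ) +
          ∑ z ∈ sphere G ω x₀ a, ((ball G τ z s).card : ℝ)) :=
        percExp_mono hp0 hp1 fun τ => by exact_mod_cast card_ball_splice_le ω τ x₀ a s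
    _ = (ball G ω x₀ a).card +
          ∑ z ∈ sphere G ω x₀ a, percExp p fun τ => ((ball G τ z s).card : ℝ) := by
        rw [percExp_add, percExp_const, percExp_sum]
    _ ≤ (ball G ω x₀ a).card + (sphere G ω x₀ a).card * M := by
        gcongr
        exact (sum_le_card_nsmul _ _ _ fun z _ => hM z).trans_eq (nsmul_eq_mul _ _)

end Balls

section Symmetry

variable {V : Type*} {G : SimpleGraph V}

def openGraphIso (ω : Sym2 V → Bool) (φ : G ≃g G) :
    openGraph G (ω ∘ Sym2.map φ) ≃g openGraph G ω where
  toEquiv := φ.toEquiv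
  map_rel_iff' := by simp [openGraph, OpenAdj, φ.map_adj_iff]

theorem connWithin_comp_map_iff (ω : Sym2 V → Bool) (φ : G ≃g G) {x y : V} {r : ℕ} :
    ConnWithin G (ω ∘ Sym2.map φ) x y r ↔ ConnWithin G ω (φ x) (φ y) r :=
  ⟨ConnWithin.map (openGraphIso ω φ).toHom, fun h => by
    convert ConnWithin.map (openGraphIso ω φ).symm.toHom h using 2 <;>
      exact ((openGraphIso ω φ).symm_apply_apply _).symm⟩

variable [Fintype V] [DecidableEq V] {p : ℝ}

theorem percExp_comp_map (φ : G ≃g G) (F : (Sym2 V → Bool) → ℝ) :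
    percExp p (fun ω => F (ω ∘ Sym2.map φ)) = percExp p F := by
  have hmap : Function.Bijective (Sym2.map φ) :=
    Finite.injective_iff_bijective.1 (Sym2.map.injective φ.injective)
  have hweight : ∀ ω : Sym2 V → Bool, edgeWeight p (ω ∘ Sym2.map φ) = edgeWeight p ω :=
    fun ω => Fintype.prod_bijective _ hmap _ _ fun _ => rfl
  refine Fintype.sum_bijective (fun ω => ω ∘ Sym2.map φ)
    (Finite.injective_iff_bijective.1 (hmap.2.injective_comp_right)) _ _ fun ω => ?_
  rw [hweight]

theorem percExp_ballSize_eq_of_iso (φ : G ≃g G) (x : V) (s : ℕ) :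
    percExp p (fun ω => (ballSize G ω (φ x) s : ℝ)) =
      percExp p (fun ω => (ballSize G ω x s : ℝ)) := by
  rw [← percExp_comp_map φ fun ω => (ballSize G ω x s : ℝ)]
  congr! 3 with ω
  exact Nat.card_congr (Equiv.subtypeEquiv φ.toEquiv fun y => connWithin_comp_map_iff ω φ).symm

end Symmetry

section Recursion

theorem exists_mem_le_of_sum_le_card_mul {κ : Type*} {s : Finset κ} (hs : s.Nonempty)
    {g : κ → ℝ} {c : ℝ} (h : ∑ i ∈ s, g i ≤ s.card * c) : ∃ i ∈ s, g i ≤ c :=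
  exists_le_of_sum_le hs (by simpa using h)

variable {f g : ℕ → ℝ} {r : ℕ}

theorem monotone_of_eq_sum_range (hg : ∀ i, 0 ≤ g i)
    (hf : ∀ t, f t = ∑ i ∈ range (t + 1), g i) : Monotone f :=
  monotone_nat_of_le_succ fun t => by
    rw [hf (t + 1), sum_range_succ, ← hf]
    linarith [hg (t + 1)]

/-- Each window of length `r` beyond the previous good radius `j` contains a radius where `g`
is four times smaller, and the budget `r/3 - f j` shrinks by the same factor. -/
theorem exists_le_pow_of_le_div_four (hg : ∀ i, 0 ≤ g i)
    (hf : ∀ t, f t = ∑ i ∈ range (t + 1), g i) (hr : 0 < r) (hfr : f r ≤ r / 4)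
    (hstep : ∀ a, f (a + r) ≤ f a + g a * f r) (k : ℕ) :
    ∃ j, k ≤ j ∧ g j ≤ (1 / 4) ^ (k + 1) ∧ f j ≤ r / 3 * (1 - (1 / 4) ^ (k + 1)) := by
  have hmono := monotone_of_eq_sum_range hg hf
  induction k with
  | zero =>
    obtain ⟨i, hi, hgi⟩ : ∃ i ∈ range (r + 1), g i ≤ 1 / 4 := by
      refine exists_mem_le_of_sum_le_card_mul nonempty_range_add_one ?_
      rw [← hf, card_range]
      push_cast
      linarith
    refine ⟨i, i.zero_le, by simpa using hgi, ?_⟩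
    calc f i ≤ f r := hmono (Nat.lt_succ_iff.1 (mem_range.1 hi))
      _ ≤ r / 3 * (1 - (1 / 4) ^ (0 + 1)) := by norm_num; linarith
  | succ k ih =>
    obtain ⟨j, hkj, hgj, hfj⟩ := ih
    set q : ℝ := (1 / 4) ^ (k + 1)
    have hgrowth : f (j + r) ≤ f j + q * (r / 4) :=
      (hstep j).trans (by gcongr; exact (hf r ▸ sum_nonneg fun i _ => hg i))
    have hwindow :
        ∑ i ∈ Ico (j + 1) (j + r + 1), g i ≤ (Ico (j + 1) (j + r + 1)).card * (q / 4) := by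
      have := sum_range_add_sum_Ico g (show j + 1 ≤ j + r + 1 by omega)
      rw [← hf, ← hf] at this
      rw [Nat.card_Ico, show j + r + 1 - (j + 1) = r by omega]
      linarith
    obtain ⟨i, hi, hgi⟩ := exists_mem_le_of_sum_le_card_mul (nonempty_Ico.2 (by omega)) hwindow
    obtain ⟨hji, hir⟩ := mem_Ico.1 hi
    refine ⟨i, by omega, by rw [pow_succ]; exact hgi.trans_eq (by ring), ?_⟩
    calc f i ≤ f (j + r) := hmono (by omega)
      _ ≤ r / 3 * (1 - q) + q * (r / 4) := by linarith
      _ = r / 3 * (1 - (1 / 4) ^ (k + 1 + 1)) := by rw [pow_succ]; ring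

theorem le_div_three_of_le_div_four (hg : ∀ i, 0 ≤ g i)
    (hf : ∀ t, f t = ∑ i ∈ range (t + 1), g i) (hr : 0 < r) (hfr : f r ≤ r / 4)
    (hstep : ∀ a, f (a + r) ≤ f a + g a * f r) (n : ℕ) : f n ≤ r / 3 := by
  obtain ⟨j, hnj, -, hfj⟩ := exists_le_pow_of_le_div_four hg hf hr hfr hstep n
  calc f n ≤ f j := monotone_of_eq_sum_range hg hf hnj
    _ ≤ r / 3 * (1 - (1 / 4) ^ (n + 1)) := hfj
    _ ≤ r / 3 := mul_le_of_le_one_right (by positivity) (sub_le_self _ (by positivity))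

end Recursion

end Percolation

open Percolation

/-- **Lower bound on the critical expected ball size.**  For any `λ > 0` there is a
constant `ξ > 0` such that on any finite transitive graph, if `p_c ∈ [0,1]` satisfies
`E_{p_c}|C(0)| = λ V^{1/3}`, then `E_{p_c}|B(r)| ≥ r/4` for all integers
`r ≤ ξ V^{1/3}`. -/
theorem critical_ball_lower_bound :
    ∀ lam : ℝ, 0 < lam → ∃ ξ : ℝ, 0 < ξ ∧
      ∀ (V : Type) [Fintype V] [DecidableEq V] (G : SimpleGraph V),
        (∀ x y : V, ∃ φ : G ≃g G, φ x = y) →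
        ∀ (p : ℝ), 0 ≤ p → p ≤ 1 → ∀ x₀ : V,
          percExp p (fun ω => (clusterSize G ω x₀ : ℝ))
            = lam * (Fintype.card V : ℝ) ^ ((1 : ℝ) / 3) →
          ∀ r : ℕ, (r : ℝ) ≤ ξ * (Fintype.card V : ℝ) ^ ((1 : ℝ) / 3) →
            (r : ℝ) / 4 ≤ percExp p (fun ω => (ballSize G ω x₀ r : ℝ)) := by
  intro lam hlam
  refine ⟨lam / 2, half_pos hlam, ?_⟩
  intro V _ _ G htrans p hp0 hp1 x₀ hcluster r hr
  rcases r.eq_zero_or_pos with rfl | hr0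
  · simpa using percExp_nonneg hp0 hp1 fun ω => Nat.cast_nonneg (ballSize G ω x₀ 0)
  by_contra! hsmall
  have hstep (a : ℕ) := percExp_ballSize_add_le hp0 hp1 x₀ a r fun z =>
    (htrans x₀ z).elim fun φ hφ => (hφ ▸ percExp_ballSize_eq_of_iso φ x₀ r).le
  have hbounded := le_div_three_of_le_div_four
    (fun i => percExp_nonneg hp0 hp1 fun ω => Nat.cast_nonneg _)
    (percExp_ballSize_eq_sum x₀) hr0 hsmall.le hstep (Fintype.card V)
  have hcluster_le := (percExp_clusterSize_le hp0 hp1 x₀).trans hbounded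
  have hV : 0 < (Fintype.card V : ℝ) ^ ((1 : ℝ) / 3) := by
    have : 0 < Fintype.card V := Fintype.card_pos_iff.2 ⟨x₀⟩
    positivity
  linarith [mul_pos hlam hV]

end
end

section
/- Suppose a nonnegative function M = M(γ) on (0,1) satisfies M(0) = 0 and the differential inequality M ≥ B(γ + M²/2)·(∂M/∂γ) for all γ in (0,γ₀], where B ∈ (0,2) is a constant. Then M(γ)² ≤ 2γ(2-B)/B for all γ ∈ (0,γ₀]. -/
/-!
If `A M² ≤ 2γ` on `[0, γ₀]` for some `A ≥ 0`, feeding this bound into the differential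
inequality gives `B (1 + A)/2 · M M' ≤ 1`, and integrating from `0` (where `M = 0`) gives
`B (1 + A)/2 · M² ≤ 2γ`. Starting from `A = 0`, the iterates of `A ↦ B (1 + A)/2`
increase to its fixed point `B/(2 - B)` since `B < 2`.
-/

open Set Filter Topology

lemma mul_sq_le_of_mul_mul_deriv_le {M : ℝ → ℝ} {a c : ℝ} (hM0 : M 0 = 0)
    (hMdiff : ∀ x ∈ Icc 0 a, DifferentiableAt ℝ M x)
    (hderiv : ∀ x ∈ Ioo 0 a, c * M x * deriv M x ≤ 1) :
    ∀ x ∈ Icc 0 a, c * M x ^ 2 ≤ 2 * x := by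
  intro x hx
  have hf : ∀ y ∈ Icc 0 a, HasDerivAt (fun y => c * M y ^ 2) (c * (2 * M y * deriv M y)) y :=
    fun y hy => by simpa using ((hMdiff y hy).hasDerivAt.pow 2).const_mul c
  have hmv := (convex_Icc 0 a).image_sub_le_mul_sub_of_deriv_le (C := 2)
    (fun y hy => (hf y hy).continuousAt.continuousWithinAt)
    (fun y hy => (hf y (interior_subset hy)).differentiableAt.differentiableWithinAt)
    (fun y hy => by
      rw [interior_Icc] at hy
      rw [(hf y (Ioo_subset_Icc_self hy)).deriv]
      linarith [hderiv y hy])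
    0 ⟨le_rfl, hx.1.trans hx.2⟩ x hx hx.1
  simpa [hM0] using hmv

lemma mul_mul_deriv_le_one {B A γ m d : ℝ} (hB : 0 < B) (hA : 0 ≤ A) (hm : 0 ≤ m)
    (hbound : A * m ^ 2 ≤ 2 * γ) (hODE : B * (γ + m ^ 2 / 2) * d ≤ m) :
    B * (1 + A) / 2 * m * d ≤ 1 := by
  rcases le_or_gt d 0 with hd | hd
  · have : 0 ≤ B * (1 + A) / 2 * m := by positivity
    nlinarith
  rcases hm.eq_or_lt with rfl | hm
  · simp
  have hsq : B * (1 + A) / 2 * m ^ 2 * d ≤ m := by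
    nlinarith [mul_le_mul_of_nonneg_left hbound (by positivity : 0 ≤ B * d / 2)]
  rw [← mul_le_mul_iff_of_pos_right hm]
  nlinarith

/-- The paper's `A_n = ∑_{j=1}^n (B/2)^j`, in closed form. -/
noncomputable def boundCoeff (B : ℝ) (n : ℕ) : ℝ := B / (2 - B) * (1 - (B / 2) ^ n)

@[simp]
lemma boundCoeff_zero (B : ℝ) : boundCoeff B 0 = 0 := by
  simp [boundCoeff]

lemma boundCoeff_succ {B : ℝ} (hB : B < 2) (n : ℕ) :
    boundCoeff B (n + 1) = B * (1 + boundCoeff B n) / 2 := by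
  have : 2 - B ≠ 0 := by linarith
  simp only [boundCoeff]
  field_simp
  ring

lemma boundCoeff_nonneg {B : ℝ} (hB0 : 0 < B) (hB2 : B < 2) (n : ℕ) : 0 ≤ boundCoeff B n := by
  have : (B / 2) ^ n ≤ 1 := pow_le_one₀ (by positivity) (by linarith)
  have : 0 < 2 - B := by linarith
  have : 0 ≤ 1 - (B / 2) ^ n := by linarith
  unfold boundCoeff
  positivity

lemma tendsto_boundCoeff {B : ℝ} (hB0 : 0 < B) (hB2 : B < 2) :
    Tendsto (boundCoeff B) atTop (𝓝 (B / (2 - B))) := by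
  unfold boundCoeff
  simpa using ((tendsto_pow_atTop_nhds_zero_of_lt_one (by positivity) (by linarith)).const_sub
    (1 : ℝ)).const_mul (B / (2 - B))

theorem magnetization_diff_ineq_integration_general
    (γ₀ B : ℝ) (hB0 : 0 < B) (hB2 : B < 2)
    (M : ℝ → ℝ)
    (hM0 : M 0 = 0)
    (hMnonneg : ∀ γ ∈ Set.Icc 0 γ₀, 0 ≤ M γ)
    (hMdiff : ∀ γ ∈ Set.Icc 0 γ₀, DifferentiableAt ℝ M γ)
    (hODE : ∀ γ ∈ Set.Ioc 0 γ₀, B * (γ + (M γ) ^ 2 / 2) * deriv M γ ≤ M γ) :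
    ∀ γ ∈ Set.Ioc 0 γ₀, (M γ) ^ 2 ≤ 2 * γ * (2 - B) / B := by
  have hbound : ∀ n : ℕ, ∀ γ ∈ Icc 0 γ₀, boundCoeff B n * M γ ^ 2 ≤ 2 * γ := by
    intro n
    induction n with
    | zero => intro γ hγ; simpa using hγ.1
    | succ n ih =>
      rw [boundCoeff_succ hB2]
      refine mul_sq_le_of_mul_mul_deriv_le hM0 hMdiff fun γ hγ => ?_
      have hγ' := Ioo_subset_Icc_self hγ
      exact mul_mul_deriv_le_one hB0 (boundCoeff_nonneg hB0 hB2 n) (hMnonneg γ hγ')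
        (ih γ hγ') (hODE γ (Ioo_subset_Ioc_self hγ))
  intro γ hγ
  have hlim : B / (2 - B) * M γ ^ 2 ≤ 2 * γ :=
    le_of_tendsto ((tendsto_boundCoeff hB0 hB2).mul_const _)
      (Eventually.of_forall fun n => hbound n γ (Ioc_subset_Icc_self hγ))
  have h2B : 0 < 2 - B := by linarith
  rw [div_mul_eq_mul_div, div_le_iff₀ h2B] at hlim
  rw [le_div_iff₀ hB0]
  linarith

/-- **Integrating the magnetization differential inequality.**  If `M ≥ 0` is increasing and
differentiable on `[0,γ₀]` with `M 0 = 0` and satisfies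
`M ≥ B (γ + M²/2) M'` on `(0,γ₀]` for a constant `B ∈ (0,2)`, then
`M(γ)² ≤ 2γ(2-B)/B` on `(0,γ₀]`. -/
theorem magnetization_diff_ineq_integration
    (γ₀ B : ℝ) (hγ₀ : 0 < γ₀) (hB0 : 0 < B) (hB2 : B < 2)
    (M : ℝ → ℝ)
    (hM0 : M 0 = 0)
    (hMnonneg : ∀ γ ∈ Set.Icc 0 γ₀, 0 ≤ M γ)
    (hMdiff : ∀ γ ∈ Set.Icc 0 γ₀, DifferentiableAt ℝ M γ)
    (hMmono : MonotoneOn M (Set.Icc 0 γ₀))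
    (hODE : ∀ γ ∈ Set.Ioc 0 γ₀, B * (γ + (M γ) ^ 2 / 2) * deriv M γ ≤ M γ) :
    ∀ γ ∈ Set.Ioc 0 γ₀, (M γ) ^ 2 ≤ 2 * γ * (2 - B) / B :=
  magnetization_diff_ineq_integration_general γ₀ B hB0 hB2 M hM0 hMnonneg hMdiff hODE
end

section
/- Let M(p, γ) be a function which is nondecreasing in each variable separately on [p₀,p₁]×[γ₀,γ₁], and suppose the differential inequality 0 ≤ (1/M)(∂M/∂γ) + (1/γ)(∂/∂p)[(A/2)pM − p] holds pointwise. Then integrating over [p₀,p₁]×[γ₀,γ₁] yields 0 ≤ (p₁ − p₀)·log(M(p₁,γ₁)/M(p₀,γ₀)) + log(γ₁/γ₀)·[(A/2)p₁M(p₁,γ₁) − (p₁ − p₀)]. -/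
/-!
Integrate the pointwise inequality over `R = [p₀,p₁] × [γ₀,γ₁]`. The term `(1/M) ∂M/∂γ` is the
`γ`-derivative of `log M`, so by Fubini its integral is `∫ (log M(p,γ₁) - log M(p,γ₀)) dp`, at most
`(p₁ - p₀) log (M(p₁,γ₁) / M(p₀,γ₀))` by monotonicity in `p`. The other term is the `p`-derivative
of `((A/2) p M - p) / γ`, so its integral is
`∫ ((A/2) (p₁ M(p₁,γ) - p₀ M(p₀,γ)) - (p₁ - p₀)) / γ dγ`, at most
`log (γ₁/γ₀) ((A/2) p₁ M(p₁,γ₁) - (p₁ - p₀))` by monotonicity in `γ` and `p₀ M ≥ 0`.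
Fubini needs `M` jointly continuous: the bounded `p`-derivative makes `M` Lipschitz in `p`
uniformly in `γ`, and `M` is continuous in `γ`.
-/

open Set MeasureTheory Real Function

section Rectangle

variable {E : Type*} [NormedAddCommGroup E] [NormedSpace ℝ E] {a b c d : ℝ}

theorem setIntegral_Icc_prod_Icc_eq_iterated {f : ℝ × ℝ → E} (hab : a ≤ b) (hcd : c ≤ d)
    (hf : IntegrableOn f (Icc a b ×ˢ Icc c d)) :
    ∫ z in Icc a b ×ˢ Icc c d, f z = ∫ x in a..b, ∫ y in c..d, f (x, y) := by
  rw [Measure.volume_eq_prod] at hf ⊢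
  simp only [setIntegral_prod f hf, integral_Icc_eq_integral_Ioc,
    intervalIntegral.integral_of_le hab, intervalIntegral.integral_of_le hcd]

theorem setIntegral_Icc_prod_Icc_eq_iterated_swap {f : ℝ × ℝ → E} (hab : a ≤ b) (hcd : c ≤ d)
    (hf : IntegrableOn f (Icc a b ×ˢ Icc c d)) :
    ∫ z in Icc a b ×ˢ Icc c d, f z = ∫ y in c..d, ∫ x in a..b, f (x, y) := by
  rw [Measure.volume_eq_prod] at hf
  have := setIntegral_Icc_prod_Icc_eq_iterated hcd hab (Measure.volume_eq_prod ℝ ℝ ▸ hf.swap)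
  simp only [comp_apply, Prod.swap_prod_mk] at this
  rw [← this, Measure.volume_eq_prod]
  exact (setIntegral_prod_swap _ _ f).symm

theorem continuousOn_uncurry_of_hasDerivAt_fst {f f' : ℝ → ℝ → E}
    (hf : ∀ x ∈ Icc a b, ContinuousOn (f x) (Icc c d))
    (hf' : ∀ x ∈ Icc a b, ∀ y ∈ Icc c d, HasDerivAt (f · y) (f' x y) x)
    (hf'_cont : ContinuousOn (uncurry f') (Icc a b ×ˢ Icc c d)) :
    ContinuousOn (uncurry f) (Icc a b ×ˢ Icc c d) := by
  obtain ⟨C, hC⟩ := (isCompact_Icc.prod isCompact_Icc).exists_bound_of_continuousOn hf'_cont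
  refine continuousOn_prod_of_continuousOn_lipschitzOnWith _ C.toNNReal hf fun y hy => ?_
  refine (convex_Icc a b).lipschitzOnWith_of_nnnorm_hasDerivWithin_le
    (fun x hx => (hf' x hx y hy).hasDerivWithinAt) fun x hx => ?_
  rw [← NNReal.coe_le_coe, coe_nnnorm]
  exact (hC (x, y) ⟨hx, hy⟩).trans (le_coe_toNNReal C)

variable [CompleteSpace E] {H h : ℝ → ℝ → E}

theorem setIntegral_Icc_prod_Icc_of_hasDerivAt_fst (hab : a ≤ b) (hcd : c ≤ d)
    (hH : ∀ x ∈ Icc a b, ∀ y ∈ Icc c d, HasDerivAt (H · y) (h x y) x)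
    (hh : ContinuousOn (uncurry h) (Icc a b ×ˢ Icc c d)) :
    ∫ z in Icc a b ×ˢ Icc c d, h z.1 z.2 = ∫ y in c..d, (H b y - H a y) := by
  refine (setIntegral_Icc_prod_Icc_eq_iterated_swap (f := uncurry h) hab hcd
    (hh.integrableOn_compact (isCompact_Icc.prod isCompact_Icc))).trans ?_
  refine intervalIntegral.integral_congr fun y hy => ?_
  rw [uIcc_of_le hcd] at hy
  refine intervalIntegral.integral_eq_sub_of_hasDerivAt (fun x hx => hH x ?_ y hy) ?_
  · rwa [uIcc_of_le hab] at hx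
  · exact (hh.uncurry_right y hy).intervalIntegrable_of_Icc hab

theorem setIntegral_Icc_prod_Icc_of_hasDerivAt_snd (hab : a ≤ b) (hcd : c ≤ d)
    (hH : ∀ x ∈ Icc a b, ∀ y ∈ Icc c d, HasDerivAt (H x) (h x y) y)
    (hh : ContinuousOn (uncurry h) (Icc a b ×ˢ Icc c d)) :
    ∫ z in Icc a b ×ˢ Icc c d, h z.1 z.2 = ∫ x in a..b, (H x d - H x c) := by
  refine (setIntegral_Icc_prod_Icc_eq_iterated (f := uncurry h) hab hcd
    (hh.integrableOn_compact (isCompact_Icc.prod isCompact_Icc))).trans ?_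
  refine intervalIntegral.integral_congr fun x hx => ?_
  rw [uIcc_of_le hab] at hx
  refine intervalIntegral.integral_eq_sub_of_hasDerivAt (fun y hy => hH x hx y ?_) ?_
  · rwa [uIcc_of_le hcd] at hy
  · exact (hh.uncurry_left x hx).intervalIntegrable_of_Icc hcd

end Rectangle

section Extrapolation

variable {f f' : ℝ → ℝ → ℝ} {a b c d : ℝ}

theorem setIntegral_logDeriv_snd_le (hab : a ≤ b) (hcd : c ≤ d)
    (hpos : ∀ x ∈ Icc a b, ∀ y ∈ Icc c d, 0 < f x y)
    (hmono : ∀ y ∈ Icc c d, MonotoneOn (f · y) (Icc a b))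
    (hf' : ∀ x ∈ Icc a b, ∀ y ∈ Icc c d, HasDerivAt (f x) (f' x y) y)
    (hf_cont : ContinuousOn (uncurry f) (Icc a b ×ˢ Icc c d))
    (hf'_cont : ContinuousOn (uncurry f') (Icc a b ×ˢ Icc c d)) :
    ∫ z in Icc a b ×ˢ Icc c d, 1 / f z.1 z.2 * f' z.1 z.2 ≤ (b - a) * log (f b d / f a c) := by
  have ha : a ∈ Icc a b := left_mem_Icc.2 hab
  have hb : b ∈ Icc a b := right_mem_Icc.2 hab
  have hc : c ∈ Icc c d := left_mem_Icc.2 hcd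
  have hd : d ∈ Icc c d := right_mem_Icc.2 hcd
  rw [setIntegral_Icc_prod_Icc_of_hasDerivAt_snd (H := fun x y => log (f x y)) hab hcd
    (fun x hx y hy => ((hf' x hx y hy).log (hpos x hx y hy).ne').congr_deriv
      (one_div_mul_eq_div _ _).symm)
    ((continuousOn_const.div hf_cont fun z hz => (hpos _ hz.1 _ hz.2).ne').mul hf'_cont)]
  have hlog_mono : ∀ y ∈ Icc c d, MonotoneOn (fun x => log (f x y)) (Icc a b) :=
    fun y hy x hx x' hx' hxx' => log_le_log (hpos x hx y hy) (hmono y hy hx hx' hxx')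
  have hlog_int : ∀ y ∈ Icc c d, IntervalIntegrable (fun x => log (f x y)) volume a b :=
    fun y hy => (uIcc_of_le hab ▸ hlog_mono y hy).intervalIntegrable
  calc ∫ x in a..b, (log (f x d) - log (f x c))
      ≤ ∫ _ in a..b, (log (f b d) - log (f a c)) := by
        refine intervalIntegral.integral_mono_on hab
          ((hlog_int d hd).sub (hlog_int c hc))
          intervalIntegrable_const fun x hx => ?_
        linarith [hlog_mono d hd hx hb hx.2, hlog_mono c hc ha hx hx.1]
    _ = (b - a) * log (f b d / f a c) := by
        rw [intervalIntegral.integral_const, smul_eq_mul,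
          log_div (hpos b hb d hd).ne' (hpos a ha c hc).ne']

theorem setIntegral_inv_snd_mul_deriv_fst_le {k : ℝ} (hk : 0 ≤ k) (ha : 0 ≤ a) (hab : a ≤ b)
    (hc : 0 < c) (hcd : c ≤ d) (hpos : ∀ y ∈ Icc c d, 0 ≤ f a y)
    (hmono : MonotoneOn (f b) (Icc c d))
    (hf' : ∀ x ∈ Icc a b, ∀ y ∈ Icc c d, HasDerivAt (f · y) (f' x y) x)
    (hf_cont : ContinuousOn (uncurry f) (Icc a b ×ˢ Icc c d))
    (hf'_cont : ContinuousOn (uncurry f') (Icc a b ×ˢ Icc c d)) :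
    ∫ z in Icc a b ×ˢ Icc c d, 1 / z.2 * (k * (f z.1 z.2 + z.1 * f' z.1 z.2) - 1)
      ≤ log (d / c) * (k * b * f b d - (b - a)) := by
  have hy₀ : ∀ y ∈ Icc c d, y ≠ 0 := fun y hy => (hc.trans_le hy.1).ne'
  have h_cont : ContinuousOn
      (fun z : ℝ × ℝ => 1 / z.2 * (k * (f z.1 z.2 + z.1 * f' z.1 z.2) - 1)) (Icc a b ×ˢ Icc c d) :=
    (continuousOn_const.div continuousOn_snd fun z hz => hy₀ _ hz.2).mul
      ((continuousOn_const.mul (hf_cont.add (continuousOn_fst.mul hf'_cont))).sub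
        continuousOn_const)
  rw [setIntegral_Icc_prod_Icc_of_hasDerivAt_fst (H := fun x y => (k * x * f x y - x) / y)
    (h := fun x y => 1 / y * (k * (f x y + x * f' x y) - 1)) hab hcd
    (fun x hx y hy => ((((hasDerivAt_id' x).const_mul k).mul (hf' x hx y hy)).sub
      (hasDerivAt_id' x)).div_const y |>.congr_deriv (by ring)) h_cont]
  have hH_cont : ∀ x ∈ Icc a b, ContinuousOn (fun y => (k * x * f x y - x) / y) (Icc c d) :=
    fun x hx => ((continuousOn_const.mul (hf_cont.uncurry_left x hx)).sub continuousOn_const).div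
      continuousOn_id hy₀
  calc ∫ y in c..d, ((k * b * f b y - b) / y - (k * a * f a y - a) / y)
      ≤ ∫ y in c..d, (k * b * f b d - (b - a)) * y⁻¹ := by
        refine intervalIntegral.integral_mono_on hcd
          (((hH_cont b (right_mem_Icc.2 hab)).sub
            (hH_cont a (left_mem_Icc.2 hab))).intervalIntegrable_of_Icc hcd)
          ((continuousOn_const.mul (continuousOn_inv₀.mono hy₀)).intervalIntegrable_of_Icc hcd)
          fun y hy => ?_
        rw [← sub_div, div_eq_mul_inv]
        refine mul_le_mul_of_nonneg_right ?_ (inv_nonneg.2 (hc.le.trans hy.1))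
        have hb_mono : k * b * f b y ≤ k * b * f b d :=
          mul_le_mul_of_nonneg_left (hmono hy (right_mem_Icc.2 hcd) hy.2)
            (mul_nonneg hk (ha.trans hab))
        have ha_nonneg : 0 ≤ k * a * f a y := mul_nonneg (mul_nonneg hk ha) (hpos y hy)
        linarith
    _ = log (d / c) * (k * b * f b d - (b - a)) := by
        rw [intervalIntegral.integral_const_mul, integral_inv_of_pos hc (hc.trans_le hcd), mul_comm]

end Extrapolation

/-- **Extrapolation inequality.**  Let `M` be a positive `C¹` function on
`[p₀,p₁] × [γ₀,γ₁]`, nondecreasing in each variable separately, with partial derivatives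
`Mp` (in `p`) and `Mg` (in `γ`), satisfying pointwise
`0 ≤ (1/M) ∂M/∂γ + (1/γ) ∂/∂p[(A/2) p M − p]`.
Then `0 ≤ (p₁−p₀) log(M(p₁,γ₁)/M(p₀,γ₀)) + log(γ₁/γ₀) [(A/2) p₁ M(p₁,γ₁) − (p₁−p₀)]`. -/
theorem extrapolation_inequality
    (M Mp Mg : ℝ → ℝ → ℝ) (A p₀ p₁ γ₀ γ₁ : ℝ)
    (hA : 0 < A) (hp₀ : 0 < p₀) (hp : p₀ < p₁) (hγ₀ : 0 < γ₀) (hγ : γ₀ < γ₁)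
    (hpos : ∀ p ∈ Icc p₀ p₁, ∀ γ ∈ Icc γ₀ γ₁, 0 < M p γ)
    (hmono_p : ∀ γ ∈ Icc γ₀ γ₁, MonotoneOn (fun p => M p γ) (Icc p₀ p₁))
    (hmono_γ : ∀ p ∈ Icc p₀ p₁, MonotoneOn (fun γ => M p γ) (Icc γ₀ γ₁))
    (hderiv_p : ∀ p ∈ Icc p₀ p₁, ∀ γ ∈ Icc γ₀ γ₁, HasDerivAt (fun q => M q γ) (Mp p γ) p)
    (hderiv_γ : ∀ p ∈ Icc p₀ p₁, ∀ γ ∈ Icc γ₀ γ₁, HasDerivAt (fun s => M p s) (Mg p γ) γ)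
    (hC1_p : ContinuousOn (fun q : ℝ × ℝ => Mp q.1 q.2) (Icc p₀ p₁ ×ˢ Icc γ₀ γ₁))
    (hC1_γ : ContinuousOn (fun q : ℝ × ℝ => Mg q.1 q.2) (Icc p₀ p₁ ×ˢ Icc γ₀ γ₁))
    (hineq : ∀ p ∈ Icc p₀ p₁, ∀ γ ∈ Icc γ₀ γ₁,
      0 ≤ (1 / M p γ) * Mg p γ + (1 / γ) * ((A / 2) * (M p γ + p * Mp p γ) - 1)) :
    0 ≤ (p₁ - p₀) * Real.log (M p₁ γ₁ / M p₀ γ₀)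
        + Real.log (γ₁ / γ₀) * ((A / 2) * p₁ * M p₁ γ₁ - (p₁ - p₀)) := by
  have hR : IsCompact (Icc p₀ p₁ ×ˢ Icc γ₀ γ₁) := isCompact_Icc.prod isCompact_Icc
  have hM : ContinuousOn (uncurry M) (Icc p₀ p₁ ×ˢ Icc γ₀ γ₁) :=
    continuousOn_uncurry_of_hasDerivAt_fst
      (fun p hp γ hγ => (hderiv_γ p hp γ hγ).continuousAt.continuousWithinAt) hderiv_p hC1_p
  have hlog_int : IntegrableOn (fun z : ℝ × ℝ => 1 / M z.1 z.2 * Mg z.1 z.2)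
      (Icc p₀ p₁ ×ˢ Icc γ₀ γ₁) :=
    ((continuousOn_const.div hM fun z hz => (hpos _ hz.1 _ hz.2).ne').mul
      hC1_γ).integrableOn_compact hR
  have hlin_int : IntegrableOn
      (fun z : ℝ × ℝ => 1 / z.2 * (A / 2 * (M z.1 z.2 + z.1 * Mp z.1 z.2) - 1))
      (Icc p₀ p₁ ×ˢ Icc γ₀ γ₁) :=
    ((continuousOn_const.div continuousOn_snd fun z hz => (hγ₀.trans_le hz.2.1).ne').mul
      ((continuousOn_const.mul (hM.add (continuousOn_fst.mul hC1_p))).sub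
        continuousOn_const)).integrableOn_compact hR
  calc 0 ≤ ∫ z in Icc p₀ p₁ ×ˢ Icc γ₀ γ₁, (1 / M z.1 z.2 * Mg z.1 z.2
        + 1 / z.2 * (A / 2 * (M z.1 z.2 + z.1 * Mp z.1 z.2) - 1)) :=
        setIntegral_nonneg (measurableSet_Icc.prod measurableSet_Icc)
          fun z hz => hineq _ hz.1 _ hz.2
    _ = (∫ z in Icc p₀ p₁ ×ˢ Icc γ₀ γ₁, 1 / M z.1 z.2 * Mg z.1 z.2)
        + ∫ z in Icc p₀ p₁ ×ˢ Icc γ₀ γ₁, 1 / z.2 * (A / 2 * (M z.1 z.2 + z.1 * Mp z.1 z.2) - 1) :=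
        integral_add hlog_int hlin_int
    _ ≤ _ := add_le_add
        (setIntegral_logDeriv_snd_le hp.le hγ.le hpos hmono_p hderiv_γ hM hC1_γ)
        (setIntegral_inv_snd_mul_deriv_fst_le (half_pos hA).le hp₀.le hp.le hγ₀ hγ.le
          (fun γ hγ => (hpos p₀ (left_mem_Icc.2 hp.le) γ hγ).le)
          (hmono_γ p₁ (right_mem_Icc.2 hp.le)) hderiv_p hM hC1_p)
end
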